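/- The simple four — five aligned consecutive squares with four PX stones and one empty square — is the unique minimal one-step PX attack, and its single empty square is both its unique trigger and its entire defence. -/

import Mathlib

/- # A formal model of Gomoku patterns and restricted games -/

abbrev Square := ℤ × ℤ

inductive Cell
  | px | py | empty
deriving DecidableEq

/-- A pattern: a finite set of board squares together with their contents. -/
structure Pattern where
  dom : Finset Square
  val : Square → Cell

def Pattern.emptySquares (p : Pattern) : Finset Square :=
  p.dom.filter (fun s => p.val s = Cell.empty)

/-- Fill (or empty) a square of the pattern with the given content. -/
def Pattern.fill (p : Pattern) (s : Square) (c : Cell) : Pattern :=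
  ⟨p.dom, fun t => if t = s then c else p.val t⟩

/-- Remove a square from the pattern. -/
def Pattern.erase (p : Pattern) (s : Square) : Pattern :=
  ⟨p.dom.erase s, p.val⟩

/-- A PX pattern contains no PY stones. -/
def Pattern.isPX (p : Pattern) : Prop :=
  ∀ s ∈ p.dom, p.val s ≠ Cell.py

/-- The four alignment directions. -/
def dirs : List Square := [(1, 0), (0, 1), (1, 1), (1, -1)]

def shift (s d : Square) (i : ℕ) : Square :=
  (s.1 + (i : ℤ) * d.1, s.2 + (i : ℤ) * d.2)

/-- A block: five aligned consecutive squares starting at `s` in direction `d`. -/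
def blockSquares (s d : Square) : Finset Square :=
  (Finset.range 5).image (fun i => shift s d i)

/-- A line: nine aligned consecutive squares. -/
def lineSquares (s d : Square) : Finset Square :=
  (Finset.range 9).image (fun i => shift s d i)

def lineCenter (s d : Square) : Square := shift s d 4

/-- Five aligned consecutive stones of colour `c` inside the pattern. -/
def hasFive (p : Pattern) (c : Cell) : Prop :=
  ∃ s d, d ∈ dirs ∧ blockSquares s d ⊆ p.dom ∧ ∀ t ∈ blockSquares s d, p.val t = c

/-- `winsIn b n p`: in the game restricted to `p`, with PX to move iff `b`,
PX (playing optimally) forces a five-in-a-row within `n` further plies,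
against any play of PY. -/
def winsIn : Bool → ℕ → Pattern → Prop
  | _, 0, p => hasFive p Cell.px
  | true, n + 1, p =>
      hasFive p Cell.px ∨ (¬ hasFive p Cell.py ∧
        ∃ s ∈ p.emptySquares, winsIn false n (p.fill s Cell.px))
  | false, n + 1, p =>
      hasFive p Cell.px ∨ (¬ hasFive p Cell.py ∧ p.emptySquares.Nonempty ∧
        ∀ s ∈ p.emptySquares, winsIn true n (p.fill s Cell.py))

/-- PX wins the restricted game moving first. -/
def pxWinsFirst (p : Pattern) : Prop := ∃ n, winsIn true n p

/-- PX wins the restricted game moving second. -/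
def pxWinsSecond (p : Pattern) : Prop := ∃ n, winsIn false n p

/-- A PX victory: a PX pattern where PX wins moving first or second. -/
def isVictory (p : Pattern) : Prop := p.isPX ∧ pxWinsFirst p ∧ pxWinsSecond p

/-- A victory of `n` steps: PX, moving second, wins placing `n` stones
(i.e. within `2*n` plies) and no fewer. -/
def victorySteps (p : Pattern) (n : ℕ) : Prop :=
  isVictory p ∧ winsIn false (2 * n) p ∧ ∀ m < n, ¬ winsIn false (2 * m) p

/-- A trigger of a pattern: an empty square whose filling by PX yields a PX victory. -/
def isTrigger (p : Pattern) (s : Square) : Prop :=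
  s ∈ p.emptySquares ∧ isVictory (p.fill s Cell.px)

/-- A PX attack: a PX pattern, not a victory, with a trigger. -/
def isAttack (p : Pattern) : Prop :=
  p.isPX ∧ ¬ isVictory p ∧ ∃ s, isTrigger p s

/-- An attack of `n` steps: `n` is one plus the steps of the fastest victory
reachable by playing a trigger. -/
def attackSteps (p : Pattern) (n : ℕ) : Prop :=
  isAttack p ∧ 1 ≤ n ∧
  (∃ s, isTrigger p s ∧ victorySteps (p.fill s Cell.px) (n - 1)) ∧
  (∀ s m, isTrigger p s → victorySteps (p.fill s Cell.px) m → n - 1 ≤ m)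

/-- A PX threat: a PX pattern, neither victory nor attack, with an empty square
whose filling by PX yields a PX attack. -/
def isThreat (p : Pattern) : Prop :=
  p.isPX ∧ ¬ isVictory p ∧ ¬ isAttack p ∧
  ∃ s ∈ p.emptySquares, isAttack (p.fill s Cell.px)

/-- A threat of `n` steps: one plus the steps of the fastest reachable attack. -/
def threatSteps (p : Pattern) (n : ℕ) : Prop :=
  isThreat p ∧ 2 ≤ n ∧
  (∃ s ∈ p.emptySquares, attackSteps (p.fill s Cell.px) (n - 1)) ∧
  (∀ s ∈ p.emptySquares, ∀ m, attackSteps (p.fill s Cell.px) m → n - 1 ≤ m)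

/-- `q` is a sub-pattern of `p`. -/
def SubPattern (q p : Pattern) : Prop :=
  q.dom ⊆ p.dom ∧ ∀ s ∈ q.dom, q.val s = p.val s

/-- Two patterns are compatible if they agree on common squares. -/
def Compatible (p q : Pattern) : Prop :=
  ∀ s ∈ p.dom ∩ q.dom, p.val s = q.val s

/-- Union of two (compatible) patterns. -/
def Pattern.union (p q : Pattern) : Pattern :=
  ⟨p.dom ∪ q.dom, fun s => if s ∈ p.dom then p.val s else q.val s⟩

open Classical in
/-- The defence of an attack: the empty squares where PY, moving first in the
restricted game, can play to stop PX from winning. -/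
noncomputable def Defence (p : Pattern) : Finset Square :=
  p.emptySquares.filter (fun s => ¬ pxWinsFirst (p.fill s Cell.py))

/-- A simple five as a relative pattern: exactly one block, all PX stones. -/
def isS5Pattern (q : Pattern) : Prop :=
  ∃ s d, d ∈ dirs ∧ q.dom = blockSquares s d ∧ ∀ t ∈ q.dom, q.val t = Cell.px

/-- A simple four as a relative pattern: one block, four PX stones, one empty. -/
def isS4Pattern (q : Pattern) : Prop :=
  ∃ s d, d ∈ dirs ∧ q.dom = blockSquares s d ∧
    (q.dom.filter (fun t => q.val t = Cell.px)).card = 4 ∧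
    (q.dom.filter (fun t => q.val t = Cell.empty)).card = 1

/-- A simple three as a relative pattern: one block, three PX stones, two empty. -/
def isS3Pattern (q : Pattern) : Prop :=
  ∃ s d, d ∈ dirs ∧ q.dom = blockSquares s d ∧
    (q.dom.filter (fun t => q.val t = Cell.px)).card = 3 ∧
    (q.dom.filter (fun t => q.val t = Cell.empty)).card = 2

/-- A PX block of degree 4 on the board `p`: a block inside `p` with no PY
stones and exactly four PX stones. -/
def isPXBlock4 (p : Pattern) (t d : Square) : Prop :=
  blockSquares t d ⊆ p.dom ∧ (∀ u ∈ blockSquares t d, p.val u ≠ Cell.py) ∧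
  ((blockSquares t d).filter (fun u => p.val u = Cell.px)).card = 4

/-- A simple four for colour `c` on board `p`: a block inside `p` with four
stones of colour `c` and a single empty (trigger) square `g`. -/
def isSimpleFourBlock (p : Pattern) (c : Cell) (t d g : Square) : Prop :=
  d ∈ dirs ∧ blockSquares t d ⊆ p.dom ∧ g ∈ blockSquares t d ∧
  p.val g = Cell.empty ∧ ∀ u ∈ blockSquares t d, u ≠ g → p.val u = c

/-- A simple three for PX on board `p`: a block inside `p` with three PX
stones, two empty squares and no PY stones. -/
def isSimpleThreeBlock (p : Pattern) (t d : Square) : Prop :=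
  d ∈ dirs ∧ blockSquares t d ⊆ p.dom ∧ (∀ u ∈ blockSquares t d, p.val u ≠ Cell.py) ∧
  ((blockSquares t d).filter (fun u => p.val u = Cell.px)).card = 3 ∧
  ((blockSquares t d).filter (fun u => p.val u = Cell.empty)).card = 2

/-- The tracker vector of two blocks `A`, `B`: at each square, the number of
blocks among `A`, `B` in which that square is empty. -/
def tracker (p : Pattern) (A B : Finset Square) (t : Square) : ℕ :=
  (if t ∈ A ∧ p.val t = Cell.empty then 1 else 0) +
  (if t ∈ B ∧ p.val t = Cell.empty then 1 else 0)

/-- The pattern `+XXXX+`: six aligned consecutive squares, four PX stones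
flanked by two empty squares. -/
def d4pat : Pattern :=
  ⟨(Finset.range 6).image (fun i : ℕ => ((i : ℤ), (0 : ℤ))),
   fun s => if s = ((0 : ℤ), (0 : ℤ)) ∨ s = ((5 : ℤ), (0 : ℤ)) then Cell.empty else Cell.px⟩

/-- The pattern `XXXX+`: four aligned consecutive PX stones followed by one
empty square. -/
def s4pat : Pattern :=
  ⟨(Finset.range 5).image (fun i : ℕ => ((i : ℤ), (0 : ℤ))),
   fun s => if s = ((4 : ℤ), (0 : ℤ)) then Cell.empty else Cell.px⟩

/- ## Helper lemmas -/

lemma block_card {d : Square} (hd : d ∈ dirs) (t : Square) : (blockSquares t d).card = 5 := by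
  rw [blockSquares, Finset.card_image_of_injOn, Finset.card_range]
  intro i hi j hj hij
  simp only [Finset.coe_range, Set.mem_Iio] at hi hj
  simp only [dirs, List.mem_cons, List.not_mem_nil, or_false] at hd
  rcases hd with h | h | h | h <;> subst h <;>
    simp only [shift, Prod.mk.injEq] at hij <;> omega

lemma hasFive_card {q : Pattern} {c : Cell} (h : hasFive q c) : 5 ≤ q.dom.card := by
  obtain ⟨s, d, hd, hsub, _⟩ := h
  calc 5 = (blockSquares s d).card := (block_card hd s).symm
    _ ≤ q.dom.card := Finset.card_le_card hsub

lemma no_winsIn_small : ∀ (n : ℕ) (b : Bool) (q : Pattern), q.dom.card < 5 → ¬ winsIn b n q := by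
  intro n
  induction n with
  | zero =>
    intro b q hq h
    cases b <;> exact absurd (hasFive_card h) (by omega)
  | succ n ih =>
    intro b q hq h
    cases b with
    | true =>
      rcases h with h5 | ⟨-, s, hs, hw⟩
      · exact absurd (hasFive_card h5) (by omega)
      · exact ih false (q.fill s Cell.px) hq hw
    | false =>
      rcases h with h5 | ⟨-, hne, hall⟩
      · exact absurd (hasFive_card h5) (by omega)
      · obtain ⟨s, hs⟩ := hne
        exact ih true (q.fill s Cell.py) hq (hall s hs)

lemma no_winsIn_stuck {q : Pattern} (he : q.emptySquares = ∅) (h5 : ¬ hasFive q Cell.px) :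
    ∀ (b : Bool) (n : ℕ), ¬ winsIn b n q := by
  intro b n
  cases n with
  | zero => cases b <;> exact h5
  | succ n =>
    cases b with
    | true =>
      rintro (h | ⟨-, s, hs, -⟩)
      · exact h5 h
      · rw [he] at hs; exact absurd hs (Finset.notMem_empty s)
    | false =>
      rintro (h | ⟨-, hne, -⟩)
      · exact h5 h
      · rw [he] at hne; exact Finset.not_nonempty_empty hne

/-- Facts extracted from an `isS4Pattern`. -/
lemma s4_facts {p : Pattern} (h : isS4Pattern p) :
    ∃ g : Square, g ∈ p.dom ∧ p.val g = Cell.empty ∧ p.emptySquares = {g} ∧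
      (∀ u ∈ p.dom, u ≠ g → p.val u = Cell.px) ∧ p.dom.card = 5 ∧
      (∀ t' d', d' ∈ dirs → blockSquares t' d' ⊆ p.dom → blockSquares t' d' = p.dom) := by
  obtain ⟨s, d, hd, hdom, hpx4, hemp1⟩ := h
  have hcard : p.dom.card = 5 := by rw [hdom]; exact block_card hd s
  obtain ⟨g, hg⟩ := Finset.card_eq_one.mp hemp1
  have hgmem : g ∈ p.dom ∧ p.val g = Cell.empty := by
    have : g ∈ p.dom.filter (fun t => p.val t = Cell.empty) := by
      rw [hg]; exact Finset.mem_singleton_self g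
    simpa using this
  have hval : ∀ u ∈ p.dom, p.val u = Cell.px ∨ p.val u = Cell.empty := by
    intro u hu
    have hdisj : Disjoint (p.dom.filter (fun t => p.val t = Cell.px))
        (p.dom.filter (fun t => p.val t = Cell.empty)) := by
      rw [Finset.disjoint_left]
      intro a ha hb
      have h1 := (Finset.mem_filter.mp ha).2
      have h2 := (Finset.mem_filter.mp hb).2
      rw [h1] at h2; exact absurd h2 (by decide)
    have hsub : (p.dom.filter (fun t => p.val t = Cell.px)) ∪
        (p.dom.filter (fun t => p.val t = Cell.empty)) ⊆ p.dom :=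
      Finset.union_subset (Finset.filter_subset _ _) (Finset.filter_subset _ _)
    have hceq : ((p.dom.filter (fun t => p.val t = Cell.px)) ∪
        (p.dom.filter (fun t => p.val t = Cell.empty))).card = p.dom.card := by
      rw [Finset.card_union_of_disjoint hdisj, hpx4, hemp1, hcard]
    have heq := Finset.eq_of_subset_of_card_le hsub (le_of_eq hceq.symm)
    rw [← heq] at hu
    rcases Finset.mem_union.mp hu with h | h
    · exact Or.inl (Finset.mem_filter.mp h).2
    · exact Or.inr (Finset.mem_filter.mp h).2
  refine ⟨g, hgmem.1, hgmem.2, hg, ?_, hcard, ?_⟩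
  · intro u hu hug
    rcases hval u hu with h | h
    · exact h
    · exfalso; apply hug
      have : u ∈ p.dom.filter (fun t => p.val t = Cell.empty) := Finset.mem_filter.mpr ⟨hu, h⟩
      rw [hg] at this; exact Finset.mem_singleton.mp this
  · intro t' d' hd' hsub
    apply Finset.eq_of_subset_of_card_le hsub
    rw [hcard, block_card hd' t']

/-- An S4 pattern with unique empty square `g`: key winning / non-winning facts. -/
lemma s4_main {p : Pattern} (h : isS4Pattern p) {g : Square}
    (hgdom : g ∈ p.dom) (hgval : p.val g = Cell.empty) (hge : p.emptySquares = {g})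
    (hoth : ∀ u ∈ p.dom, u ≠ g → p.val u = Cell.px)
    (hblk : ∀ t' d', d' ∈ dirs → blockSquares t' d' ⊆ p.dom → blockSquares t' d' = p.dom) :
    ¬ hasFive p Cell.px ∧ ¬ hasFive p Cell.py ∧ isVictory (p.fill g Cell.px) ∧
    hasFive (p.fill g Cell.px) Cell.px ∧
    (∀ b n, ¬ winsIn b n (p.fill g Cell.py)) ∧ ¬ pxWinsSecond p ∧ p.isPX := by
  have hPX : p.isPX := by
    intro u hu hpy
    by_cases hug : u = g
    · rw [hug, hgval] at hpy; exact absurd hpy (by decide)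
    · rw [hoth u hu hug] at hpy; exact absurd hpy (by decide)
  have h5px : ¬ hasFive p Cell.px := by
    rintro ⟨t', d', hd', hsub, hall⟩
    have hpv := hall g (by rw [hblk t' d' hd' hsub]; exact hgdom)
    rw [hgval] at hpv; exact absurd hpv (by decide)
  have h5py : ¬ hasFive p Cell.py := by
    rintro ⟨t', d', hd', hsub, hall⟩
    have hpv := hall g (by rw [hblk t' d' hd' hsub]; exact hgdom)
    rw [hgval] at hpv; exact absurd hpv (by decide)
  have hfive_fill : hasFive (p.fill g Cell.px) Cell.px := by
    obtain ⟨s, d, hd, hdom, -, -⟩ := h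
    refine ⟨s, d, hd, by rw [show (p.fill g Cell.px).dom = p.dom from rfl, hdom], ?_⟩
    intro u hu
    show (if u = g then Cell.px else p.val u) = Cell.px
    split
    · rfl
    · exact hoth u (by rw [hdom]; exact hu) (by assumption)
  have hvic : isVictory (p.fill g Cell.px) := by
    refine ⟨?_, ⟨0, hfive_fill⟩, ⟨0, hfive_fill⟩⟩
    intro u hu
    show (if u = g then Cell.px else p.val u) ≠ Cell.py
    split
    · decide
    · exact hPX u hu
  have hempty_fill : (p.fill g Cell.py).emptySquares = ∅ := by
    ext u
    simp only [Pattern.emptySquares, Pattern.fill, Finset.mem_filter, Finset.notMem_empty,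
      iff_false, not_and]
    intro hu
    obtain ⟨hu, hval⟩ := Finset.mem_filter.mp hu
    by_cases hug : u = g
    · rw [if_pos hug] at hval; exact absurd hval (by decide)
    · rw [if_neg hug, hoth u hu hug] at hval; exact absurd hval (by decide)
  have h5fillpy : ¬ hasFive (p.fill g Cell.py) Cell.px := by
    rintro ⟨t', d', hd', hsub, hall⟩
    have hg' : g ∈ blockSquares t' d' := by rw [hblk t' d' hd' hsub]; exact hgdom
    have hpv := hall g hg'
    rw [show (p.fill g Cell.py).val g = Cell.py from if_pos rfl] at hpv
    exact absurd hpv (by decide)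
  have hnowins : ∀ b n, ¬ winsIn b n (p.fill g Cell.py) := no_winsIn_stuck hempty_fill h5fillpy
  have hnosecond : ¬ pxWinsSecond p := by
    rintro ⟨n, hn⟩
    cases n with
    | zero => exact h5px hn
    | succ n =>
      rcases hn with h5 | ⟨-, -, hall⟩
      · exact h5px h5
      · exact hnowins true n (hall g (by rw [hge]; exact Finset.mem_singleton_self g))
  exact ⟨h5px, h5py, hvic, hfive_fill, hnowins, hnosecond, hPX⟩

/-- The simple four is the unique minimal one-step PX attack, and
its single empty square is both its unique trigger and its entire defence. -/
theorem stmt10 (p : Pattern) :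
    ((attackSteps p 1 ∧
        ∀ s ∈ p.dom, ¬ isVictory (p.erase s) ∧ ¬ attackSteps (p.erase s) 1) ↔
      isS4Pattern p) ∧
    (isS4Pattern p → ∃ g : Square, p.emptySquares = {g} ∧
      (∀ s : Square, isTrigger p s ↔ s = g) ∧ Defence p = {g}) := by
  constructor
  · constructor
    · -- forward: minimal one-step attack → S4 pattern
      rintro ⟨⟨⟨hPX, hNV, -⟩, -, ⟨s, hTrig, hVic0⟩, -⟩, hmin⟩
      obtain ⟨hvicf, hfive, -⟩ := hVic0
      obtain ⟨t, d, hd, hsub, hall⟩ := hfive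
      have hsub' : blockSquares t d ⊆ p.dom := hsub
      have hsB : s ∈ blockSquares t d := by
        by_contra hs
        apply hNV
        have h5 : hasFive p Cell.px := ⟨t, d, hd, hsub', fun u hu => by
          have hune : u ≠ s := fun h' => hs (h' ▸ hu)
          have h := hall u hu
          rwa [show (p.fill s Cell.px).val u = p.val u from if_neg hune] at h⟩
        exact ⟨hPX, ⟨0, h5⟩, ⟨0, h5⟩⟩
      have hse : s ∈ p.emptySquares := hTrig.1
      have hsdom : s ∈ p.dom := (Finset.mem_filter.mp hse).1
      have hsval : p.val s = Cell.empty := (Finset.mem_filter.mp hse).2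
      have hbval : ∀ u ∈ blockSquares t d, u ≠ s → p.val u = Cell.px := by
        intro u hu hus
        have h := hall u hu
        rwa [show (p.fill s Cell.px).val u = p.val u from if_neg hus] at h
      have hdomeq : p.dom = blockSquares t d := by
        by_contra hne
        obtain ⟨t', ht'dom, ht'B⟩ : ∃ t', t' ∈ p.dom ∧ t' ∉ blockSquares t d := by
          by_contra hq
          push_neg at hq
          exact hne (Finset.Subset.antisymm hq hsub')
        obtain ⟨hnv', hna'⟩ := hmin t' ht'dom
        apply hna'
        have hsub'' : blockSquares t d ⊆ (p.erase t').dom := by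
          intro u hu
          exact Finset.mem_erase.mpr ⟨fun h => ht'B (h ▸ hu), hsub' hu⟩
        have hfive' : hasFive ((p.erase t').fill s Cell.px) Cell.px :=
          ⟨t, d, hd, hsub'', fun u hu => hall u hu⟩
        have hPX' : ((p.erase t').fill s Cell.px).isPX := by
          intro u hu
          show (if u = s then Cell.px else p.val u) ≠ Cell.py
          split
          · decide
          · exact hPX u (Finset.mem_of_mem_erase hu)
        have hvic' : isVictory ((p.erase t').fill s Cell.px) := ⟨hPX', ⟨0, hfive'⟩, ⟨0, hfive'⟩⟩
        have hsmem' : s ∈ (p.erase t').dom :=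
          Finset.mem_erase.mpr ⟨fun h => ht'B (h ▸ hsB), hsdom⟩
        have htrig' : isTrigger (p.erase t') s :=
          ⟨Finset.mem_filter.mpr ⟨hsmem', hsval⟩, hvic'⟩
        exact ⟨⟨fun u hu => hPX u (Finset.mem_of_mem_erase hu), hnv', s, htrig'⟩, le_refl 1,
          ⟨s, htrig', hvic', hfive', fun m hm => absurd hm (Nat.not_lt_zero m)⟩,
          fun s' m _ _ => Nat.zero_le m⟩
      refine ⟨t, d, hd, hdomeq, ?_, ?_⟩
      · have hpxf : p.dom.filter (fun u => p.val u = Cell.px) = p.dom.erase s := by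
          ext u
          simp only [Finset.mem_filter, Finset.mem_erase]
          constructor
          · rintro ⟨hu, hv⟩
            refine ⟨fun h => ?_, hu⟩
            rw [h, hsval] at hv; exact absurd hv (by decide)
          · rintro ⟨hus, hu⟩
            exact ⟨hu, hbval u (hdomeq ▸ hu) hus⟩
        rw [hpxf, Finset.card_erase_of_mem hsdom, hdomeq, block_card hd]
      · have hef : p.dom.filter (fun u => p.val u = Cell.empty) = {s} := by
          ext u
          simp only [Finset.mem_filter, Finset.mem_singleton]
          constructor
          · rintro ⟨hu, hv⟩
            by_contra hus
            rw [hbval u (hdomeq ▸ hu) hus] at hv; exact absurd hv (by decide)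
          · rintro rfl
            exact ⟨hsdom, hsval⟩
        rw [hef, Finset.card_singleton]
    · -- backward: S4 pattern → minimal one-step attack
      intro h4
      obtain ⟨g, hgdom, hgval, hge, hoth, hcard, hblk⟩ := s4_facts h4
      obtain ⟨h5px, h5py, hvic, hfive_fill, hnowins, hnosecond, hPX⟩ :=
        s4_main h4 hgdom hgval hge hoth hblk
      have hgempty : g ∈ p.emptySquares := by rw [hge]; exact Finset.mem_singleton_self g
      have hnv : ¬ isVictory p := fun h => hnosecond h.2.2
      have htrig : isTrigger p g := ⟨hgempty, hvic⟩
      refine ⟨⟨⟨hPX, hnv, g, htrig⟩, le_refl 1,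
        ⟨g, htrig, hvic, hfive_fill, fun m hm => absurd hm (Nat.not_lt_zero m)⟩,
        fun s' m _ _ => Nat.zero_le m⟩, ?_⟩
      intro t ht
      have hcard' : (p.erase t).dom.card < 5 := by
        show (p.dom.erase t).card < 5
        rw [Finset.card_erase_of_mem ht, hcard]
        omega
      constructor
      · rintro ⟨-, ⟨n, hw⟩, -⟩
        exact no_winsIn_small n true _ hcard' hw
      · rintro ⟨⟨-, -, s, -, -, ⟨n, hw⟩, -⟩, -⟩
        exact no_winsIn_small n true ((p.erase t).fill s Cell.px) hcard' hw
  · -- second part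
    intro h4
    obtain ⟨g, hgdom, hgval, hge, hoth, hcard, hblk⟩ := s4_facts h4
    obtain ⟨h5px, h5py, hvic, hfive_fill, hnowins, hnosecond, hPX⟩ :=
      s4_main h4 hgdom hgval hge hoth hblk
    have hgempty : g ∈ p.emptySquares := by rw [hge]; exact Finset.mem_singleton_self g
    refine ⟨g, hge, ?_, ?_⟩
    · intro s
      constructor
      · rintro ⟨hs, -⟩
        rw [hge] at hs; exact Finset.mem_singleton.mp hs
      · rintro rfl
        exact ⟨hgempty, hvic⟩
    · ext u
      classical
      simp only [Defence, Finset.mem_filter]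
      constructor
      · rintro ⟨h1, -⟩
        rw [hge] at h1; exact h1
      · intro h1
        rw [Finset.mem_singleton] at h1; subst h1
        exact ⟨hgempty, fun h => match h with | ⟨n, hw⟩ => hnowins true n hw⟩
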